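/- Kolmogorov consistency of the Gaussian intensities: for every integer n ≥ 2, every real p with n + p > 2, and every y ∈ ℝⁿ with Q(y) > 0, ∫_{−∞}^∞ λ_{n+1,p}(y_1, …, y_n, x) dx = λ_{n,p}(y), where for z ∈ ℝ^m (m ≥ 2, m + p > 2, Q(z) > 0) the closed-form intensity is λ_{m,p}(z) = Γ((m+p−2)/2) · 2^{(p−3)/2} · π^{−(m−1)/2} · m^{−1/2} / Q(z)^{(m+p−2)/2}. -/

import Mathlib

open MeasureTheory
open scoped ENNReal

/-- `Q(z) = ∑ᵢ (zᵢ - z̄)²` where `z̄` is the mean of the coordinates. -/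
noncomputable def Qstat (m : ℕ) (z : Fin m → ℝ) : ℝ :=
  ∑ i, (z i - (∑ j, z j) / m) ^ 2

/-- The closed-form Gaussian intensity
`λ_{m,p}(z) = Γ((m+p-2)/2) 2^{(p-3)/2} π^{-(m-1)/2} m^{-1/2} / Q(z)^{(m+p-2)/2}`. -/
noncomputable def lamClosed (m : ℕ) (p : ℝ) (z : Fin m → ℝ) : ℝ :=
  Real.Gamma (((m : ℝ) + p - 2) / 2) * (2 : ℝ) ^ ((p - 3) / 2) *
    Real.pi ^ (-((m : ℝ) - 1) / 2) * (m : ℝ) ^ (-(1 : ℝ) / 2) /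
      Qstat m z ^ (((m : ℝ) + p - 2) / 2)

/-
Appending a coordinate `x` to `y` adds `n/(n+1) · (x - ȳ)²` to `Q`, so `x ↦ λ_{n+1,p}(y, x)` is
a multiple of `(a + b (x - ȳ)²)^(-s)` with `a = Q(y)`, `b = n/(n+1)`, `s = (n+p-1)/2`. Such a power
is a mixture of Gaussians, `Γ(s) r^(-s) = ∫₀^∞ t^(s-1) e^(-rt) dt`; integrating out `x`
first (Tonelli, free for `ℝ≥0∞`-valued integrands) leaves a second Gamma integral, and
`Γ(s) ∫ (a + b x²)^(-s) dx = √(π/b) a^(1/2-s) Γ(s-1/2)`. The constants then collapse to those of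
`λ_{n,p}(y)`, since `(n+1+p-2)/2 - 1/2 = (n+p-2)/2`.
-/

open Real Set

theorem Qstat_nonneg (m : ℕ) (z : Fin m → ℝ) : 0 ≤ Qstat m z :=
  Finset.sum_nonneg fun _ _ => sq_nonneg _

theorem Qstat_snoc (n : ℕ) (y : Fin n → ℝ) (x : ℝ) :
    Qstat (n + 1) (Fin.snoc y x) =
      Qstat n y + n / (n + 1) * (x - (∑ j, y j) / n) ^ 2 := by
  rcases n.eq_zero_or_pos with rfl | hn
  · simp [Qstat]
  have hn0 : (n : ℝ) ≠ 0 := by positivity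
  have sum_sq_sub (A : ℝ) :
      ∑ i, (y i - A) ^ 2 = ∑ i, y i ^ 2 - 2 * (∑ i, y i) * A + n * A ^ 2 := by
    simp only [sub_sq, Finset.sum_add_distrib, Finset.sum_sub_distrib, ← Finset.sum_mul,
      ← Finset.mul_sum, Finset.sum_const, Finset.card_univ, Fintype.card_fin, nsmul_eq_mul]
  simp only [Qstat, Fin.sum_univ_castSucc, Fin.snoc_castSucc, Fin.snoc_last, Nat.cast_add,
    Nat.cast_one, sum_sq_sub]
  field_simp
  ring

theorem lintegral_rpow_mul_exp_neg_mul_Ioi {r s : ℝ} (hr : 0 < r) (hs : 0 < s) :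
    ∫⁻ t in Ioi (0 : ℝ), ENNReal.ofReal (t ^ (s - 1) * exp (-(r * t))) =
      ENNReal.ofReal ((1 / r) ^ s * Gamma s) := by
  rw [← integral_rpow_mul_exp_neg_mul_Ioi hs hr, ofReal_integral_eq_lintegral_ofReal]
  · refine IntegrableOn.integrable ?_
    simpa using integrableOn_rpow_mul_exp_neg_mul_rpow (p := 1) (by linarith) one_pos hr
  · filter_upwards [self_mem_ae_restrict measurableSet_Ioi] with t (ht : 0 < t)
    positivity

theorem lintegral_exp_neg_mul_sq {b : ℝ} (hb : 0 < b) :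
    ∫⁻ x : ℝ, ENNReal.ofReal (exp (-b * x ^ 2)) = ENNReal.ofReal √(π / b) := by
  rw [← integral_gaussian, ofReal_integral_eq_lintegral_ofReal (integrable_exp_neg_mul_sq hb)
    (ae_of_all _ fun x => (exp_pos _).le)]

theorem lintegral_rpow_mul_exp_neg_add_mul_sq_mul {a b s t : ℝ} (hb : 0 < b) (ht : 0 < t) :
    ∫⁻ x : ℝ, ENNReal.ofReal (t ^ (s - 1) * exp (-((a + b * x ^ 2) * t))) =
      ENNReal.ofReal (√(π / b) * (t ^ (s - 1 / 2 - 1) * exp (-(a * t)))) := by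
  have split (x : ℝ) : t ^ (s - 1) * exp (-((a + b * x ^ 2) * t)) =
      t ^ (s - 1) * exp (-(a * t)) * exp (-(b * t) * x ^ 2) := by
    rw [mul_assoc, ← exp_add]
    ring_nf
  have scale : t ^ (s - 1) * √(π / (b * t)) = √(π / b) * t ^ (s - 1 / 2 - 1) := by
    rw [div_mul_eq_div_div, sqrt_div' _ ht.le, sqrt_eq_rpow t, div_eq_mul_inv,
      ← rpow_neg ht.le, show s - 1 / 2 - 1 = s - 1 + -(1 / 2) by ring, rpow_add ht]
    ring
  simp_rw [split, ENNReal.ofReal_mul (by positivity : 0 ≤ t ^ (s - 1) * exp (-(a * t)))]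
  rw [lintegral_const_mul' _ _ ENNReal.ofReal_ne_top, lintegral_exp_neg_mul_sq (by positivity),
    ← ENNReal.ofReal_mul (by positivity), ← mul_assoc, ← scale]
  ring_nf

theorem lintegral_rpow_neg_add_mul_sq_mul_Gamma {a b s : ℝ} (ha : 0 < a) (hb : 0 < b)
    (hs : 1 / 2 < s) :
    (∫⁻ x : ℝ, ENNReal.ofReal ((a + b * x ^ 2) ^ (-s))) * ENNReal.ofReal (Gamma s) =
      ENNReal.ofReal (√(π / b) * ((1 / a) ^ (s - 1 / 2) * Gamma (s - 1 / 2))) := by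
  have subordination (x : ℝ) :
      ENNReal.ofReal ((a + b * x ^ 2) ^ (-s)) * ENNReal.ofReal (Gamma s) =
        ∫⁻ t in Ioi 0, ENNReal.ofReal (t ^ (s - 1) * exp (-((a + b * x ^ 2) * t))) := by
    have hr : 0 < a + b * x ^ 2 := by positivity
    rw [lintegral_rpow_mul_exp_neg_mul_Ioi hr (by linarith), ← ENNReal.ofReal_mul (by positivity),
      one_div, inv_rpow hr.le, ← rpow_neg hr.le]
  calc _ = ∫⁻ x : ℝ, ∫⁻ t in Ioi 0,
        ENNReal.ofReal (t ^ (s - 1) * exp (-((a + b * x ^ 2) * t))) := by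
        rw [← lintegral_mul_const' _ _ ENNReal.ofReal_ne_top]
        simp_rw [subordination]
    _ = ∫⁻ t in Ioi 0, ∫⁻ x : ℝ,
        ENNReal.ofReal (t ^ (s - 1) * exp (-((a + b * x ^ 2) * t))) :=
        lintegral_lintegral_swap (by fun_prop : Measurable fun q : ℝ × ℝ =>
          ENNReal.ofReal (q.2 ^ (s - 1) * exp (-((a + b * q.1 ^ 2) * q.2)))).aemeasurable
    _ = ∫⁻ t in Ioi 0, ENNReal.ofReal (√(π / b) * (t ^ (s - 1 / 2 - 1) * exp (-(a * t)))) :=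
        setLIntegral_congr_fun measurableSet_Ioi fun t ht =>
          lintegral_rpow_mul_exp_neg_add_mul_sq_mul hb ht
    _ = _ := by
        simp_rw [ENNReal.ofReal_mul (sqrt_nonneg _)]
        rw [lintegral_const_mul' _ _ ENNReal.ofReal_ne_top,
          lintegral_rpow_mul_exp_neg_mul_Ioi ha (by linarith)]

theorem lamClosed_succ_snoc (n : ℕ) (p : ℝ) (y : Fin n → ℝ) (x : ℝ) :
    lamClosed (n + 1) p (Fin.snoc y x) =
      2 ^ ((p - 3) / 2) * π ^ (-(n : ℝ) / 2) * ((n : ℝ) + 1) ^ (-(1 : ℝ) / 2) *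
        ((Qstat n y + n / (n + 1) * (x - (∑ j, y j) / n) ^ 2) ^ (-(((n : ℝ) + p - 1) / 2)) *
          Gamma (((n : ℝ) + p - 1) / 2)) := by
  have hQ : 0 ≤ Qstat n y + n / (n + 1) * (x - (∑ j, y j) / n) ^ 2 := by
    have := Qstat_nonneg n y
    positivity
  rw [lamClosed, Qstat_snoc, div_eq_mul_inv, ← rpow_neg hQ]
  push_cast
  ring_nf

theorem lamClosed_eq_marginal_const {n : ℕ} (hn : 0 < n) (p : ℝ) (y : Fin n → ℝ) :
    lamClosed n p y =
      2 ^ ((p - 3) / 2) * π ^ (-(n : ℝ) / 2) * ((n : ℝ) + 1) ^ (-(1 : ℝ) / 2) *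
        (√(π / (n / (n + 1))) * ((1 / Qstat n y) ^ (((n : ℝ) + p - 1) / 2 - 1 / 2) *
          Gamma (((n : ℝ) + p - 1) / 2 - 1 / 2))) := by
  have hn0 : (0 : ℝ) < n := Nat.cast_pos.2 hn
  have e_pi : π ^ (-(n : ℝ) / 2) * π ^ (1 / 2 : ℝ) = π ^ (-((n : ℝ) - 1) / 2) := by
    rw [← rpow_add pi_pos]
    ring_nf
  have inv_sqrt {z : ℝ} (hz : 0 ≤ z) : z ^ (-(1 : ℝ) / 2) = (z ^ (1 / 2 : ℝ))⁻¹ := by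
    rw [neg_div, rpow_neg hz]
  rw [lamClosed, show ((n : ℝ) + p - 2) / 2 = ((n : ℝ) + p - 1) / 2 - 1 / 2 by ring,
    div_rpow zero_le_one (Qstat_nonneg n y), one_rpow, sqrt_eq_rpow, div_div_eq_mul_div,
    div_rpow (by positivity) hn0.le, mul_rpow pi_pos.le (by positivity), ← e_pi, inv_sqrt hn0.le,
    inv_sqrt (by positivity)]
  field_simp

/-- Kolmogorov consistency of the Gaussian closed-form intensities:
`∫_{-∞}^∞ λ_{n+1,p}(y₁,…,yₙ,x) dx = λ_{n,p}(y)`. -/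
theorem gauss_intensity_consistent (n : ℕ) (hn : 2 ≤ n) (p : ℝ)
    (hp : 2 < (n : ℝ) + p) (y : Fin n → ℝ) (hQ : 0 < Qstat n y) :
    ∫⁻ x : ℝ, ENNReal.ofReal (lamClosed (n + 1) p (Fin.snoc y x)) =
      ENNReal.ofReal (lamClosed n p y) := by
  have hC : (0 : ℝ) ≤ 2 ^ ((p - 3) / 2) * π ^ (-(n : ℝ) / 2) * ((n : ℝ) + 1) ^ (-(1 : ℝ) / 2) :=
    by positivity
  have hΓ : 0 ≤ Gamma (((n : ℝ) + p - 1) / 2) := (Gamma_pos_of_pos (by linarith)).le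
  simp_rw [lamClosed_succ_snoc, ENNReal.ofReal_mul hC, ENNReal.ofReal_mul' hΓ]
  rw [lintegral_const_mul' _ _ ENNReal.ofReal_ne_top,
    lintegral_mul_const' _ _ ENNReal.ofReal_ne_top,
    lintegral_sub_right_eq_self (fun x => ENNReal.ofReal
      ((Qstat n y + n / (n + 1) * x ^ 2) ^ (-(((n : ℝ) + p - 1) / 2)))),
    lintegral_rpow_neg_add_mul_sq_mul_Gamma hQ (by positivity) (by linarith),
    ← ENNReal.ofReal_mul hC, lamClosed_eq_marginal_const (by omega)]
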